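/- arXiv:1810.05426 — 3 statements merged into one kernel-verified Lean document; each statement's English description precedes it below -/
import Mathlib

section
/- For 0 < r < 1, let P(r) = (1 + e^{−π}(r^{−2} − 1))^{−1/2}. Then 0 < P(r) < 1 and the integral identity ∫_r^{P(r)} du / (u(1 − u²)) = π/2 holds. -/
/-!
On `(0, 1)` the integrand `1 / (u (1 - u²))` has the antiderivative `-½ log (u⁻² - 1)`, and `P`
is defined exactly so that `P(r)⁻² - 1 = e^{-π} (r⁻² - 1)`; the two logarithms therefore differ
by `π`.
-/

open Real Set

theorem hasDerivAt_neg_log_inv_sq_sub_one_div_two {u : ℝ} (hu : u ≠ 0) (hu1 : u ^ 2 ≠ 1) :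
    HasDerivAt (fun u : ℝ => -log ((u ^ 2)⁻¹ - 1) / 2) (1 / (u * (1 - u ^ 2))) u := by
  have hsq : u ^ 2 ≠ 0 := pow_ne_zero 2 hu
  have hinv : (u ^ 2)⁻¹ - 1 ≠ 0 := by
    rw [sub_ne_zero, Ne, inv_eq_one]
    exact hu1
  refine (((((hasDerivAt_pow 2 u).fun_inv hsq).sub_const 1).log hinv).neg.div_const 2).congr_deriv
    ?_
  have h1 : 1 - u ^ 2 ≠ 0 := sub_ne_zero.mpr (Ne.symm hu1)
  field_simp
  norm_num
  ring

theorem integral_one_div_mul_one_sub_sq {a b : ℝ} (ha : a ∈ Ioo (0 : ℝ) 1)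
    (hb : b ∈ Ioo (0 : ℝ) 1) :
    ∫ u in a..b, 1 / (u * (1 - u ^ 2)) = (log ((a ^ 2)⁻¹ - 1) - log ((b ^ 2)⁻¹ - 1)) / 2 := by
  have hsub : uIcc a b ⊆ Ioo 0 1 := ordConnected_Ioo.uIcc_subset ha hb
  have hne : ∀ u ∈ uIcc a b, u ≠ 0 ∧ u ^ 2 ≠ 1 := fun u hu => by
    obtain ⟨hu0, hu1⟩ := hsub hu
    exact ⟨hu0.ne', by nlinarith⟩
  rw [intervalIntegral.integral_eq_sub_of_hasDerivAt
    (fun u hu => hasDerivAt_neg_log_inv_sq_sub_one_div_two (hne u hu).1 (hne u hu).2)]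
  · ring
  · refine ContinuousOn.intervalIntegrable (continuousOn_const.div (by fun_prop) fun u hu => ?_)
    have h1 : 1 - u ^ 2 ≠ 0 := sub_ne_zero.mpr (Ne.symm (hne u hu).2)
    exact mul_ne_zero (hne u hu).1 h1

theorem rpow_neg_one_half_mem_Ioo {A : ℝ} (hA : 1 < A) : A ^ (-(1 / 2) : ℝ) ∈ Ioo (0 : ℝ) 1 :=
  ⟨rpow_pos_of_pos (by linarith) _, rpow_lt_one_of_one_lt_of_neg hA (by norm_num)⟩

theorem inv_sq_rpow_neg_one_half {A : ℝ} (hA : 0 ≤ A) : ((A ^ (-(1 / 2) : ℝ)) ^ 2)⁻¹ = A := by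
  rw [← rpow_natCast, ← rpow_mul hA]
  norm_num [rpow_neg_one]

/-- For `0 < r < 1`, let `P r = (1 + e^{−π}(r⁻² − 1))^{−1/2}`.
Then `0 < P r < 1` and `∫_r^{P r} du / (u (1 − u²)) = π / 2`. -/
theorem poincare_map_integral_identity (r : ℝ) (hr0 : 0 < r) (hr1 : r < 1)
    (P : ℝ → ℝ)
    (hP : ∀ s : ℝ, P s = (1 + Real.exp (-π) * ((s ^ 2)⁻¹ - 1)) ^ (-(1 / 2) : ℝ)) :
    0 < P r ∧ P r < 1 ∧
    (∫ u in r..(P r), 1 / (u * (1 - u ^ 2))) = π / 2 := by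
  set B := (r ^ 2)⁻¹ - 1 with hB
  have hB_pos : 0 < B := by
    rw [hB, sub_pos, one_lt_inv₀ (by positivity)]
    nlinarith
  have hA : 1 < 1 + exp (-π) * B := lt_add_of_pos_right 1 (mul_pos (exp_pos _) hB_pos)
  have hPr : P r ∈ Ioo (0 : ℝ) 1 := hP r ▸ rpow_neg_one_half_mem_Ioo hA
  have hPr_inv_sq : ((P r) ^ 2)⁻¹ - 1 = exp (-π) * B := by
    rw [hP r, inv_sq_rpow_neg_one_half (by linarith)]
    ring
  refine ⟨hPr.1, hPr.2, ?_⟩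
  rw [integral_one_div_mul_one_sub_sq ⟨hr0, hr1⟩ hPr, ← hB, hPr_inv_sq,
    log_mul (exp_pos _).ne' hB_pos.ne', log_exp]
  ring
end

section
/- For c > 0, define Θ_c : ℝ → ℝ by Θ_c(r) = (1 + e^{−π}(e^{−2c(r−1)} − 1))^{−1/2}. Then the radicand 1 + e^{−π}(e^{−2c(r−1)} − 1) is positive for every r ∈ ℝ (it exceeds 1 − e^{−π} > 0), Θ_c(1) = 1, Θ_c is differentiable with Θ_c′(r) = c e^{−2c(r−1)−π}(1 + e^{−π}(e^{−2c(r−1)} − 1))^{−3/2}, and in particular Θ_c′(1) = c e^{−π}. Consequently, for c₁ ≠ c₂ the maps Θ_{c₁} and Θ_{c₂} have distinct derivatives at their common fixed point 1. -/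
open Real

theorem one_sub_lt_one_add_mul_sub_one {a x : ℝ} (ha : 0 < a) (hx : 0 < x) :
    1 - a < 1 + a * (x - 1) := by
  nlinarith

theorem hasDerivAt_rpow_one_add_mul_exp_sub_one {a b p r : ℝ}
    (h : 1 + a * (exp (b * (r - 1)) - 1) ≠ 0) :
    HasDerivAt (fun x => (1 + a * (exp (b * (x - 1)) - 1)) ^ p)
      (a * (exp (b * (r - 1)) * b) * p * (1 + a * (exp (b * (r - 1)) - 1)) ^ (p - 1)) r := by
  have hlin : HasDerivAt (fun x => b * (x - 1)) b r := by
    simpa using ((hasDerivAt_id r).sub_const 1).const_mul b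
  have hrad : HasDerivAt (fun x => 1 + a * (exp (b * (x - 1)) - 1))
      (a * (exp (b * (r - 1)) * b)) r := by
    simpa using ((hlin.exp.sub_const 1).const_mul a).const_add 1
  exact hrad.rpow_const (Or.inl h)

/-- For `c > 0`, define `Θ_c(r) = (1 + e^{−π}(e^{−2c(r−1)} − 1))^{−1/2}`.
Then the radicand is positive for every `r` (it exceeds `1 − e^{−π} > 0`), `Θ_c(1) = 1`,
`Θ_c` is differentiable with
`Θ_c′(r) = c e^{−2c(r−1)−π} (1 + e^{−π}(e^{−2c(r−1)} − 1))^{−3/2}`, and `Θ_c′(1) = c e^{−π}`.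
Consequently, for `c₁ ≠ c₂` the maps `Θ_{c₁}` and `Θ_{c₂}` have distinct derivatives at their
common fixed point `1`. -/
theorem poincare_map_modified_reset_derivative
    (Θ : ℝ → ℝ → ℝ)
    (hΘ : ∀ c r : ℝ,
      Θ c r = (1 + Real.exp (-π) * (Real.exp (-2 * c * (r - 1)) - 1)) ^ (-(1 / 2) : ℝ)) :
    (∀ c r : ℝ, 0 < c →
      1 - Real.exp (-π) < 1 + Real.exp (-π) * (Real.exp (-2 * c * (r - 1)) - 1) ∧
      0 < 1 + Real.exp (-π) * (Real.exp (-2 * c * (r - 1)) - 1)) ∧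
    (0 : ℝ) < 1 - Real.exp (-π) ∧
    (∀ c : ℝ, 0 < c → Θ c 1 = 1) ∧
    (∀ c r : ℝ, 0 < c → HasDerivAt (Θ c)
      (c * Real.exp (-2 * c * (r - 1) - π) *
        (1 + Real.exp (-π) * (Real.exp (-2 * c * (r - 1)) - 1)) ^ (-(3 / 2) : ℝ)) r) ∧
    (∀ c : ℝ, 0 < c → deriv (Θ c) 1 = c * Real.exp (-π)) ∧
    (∀ c₁ c₂ : ℝ, 0 < c₁ → 0 < c₂ → c₁ ≠ c₂ → deriv (Θ c₁) 1 ≠ deriv (Θ c₂) 1) := by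
  have hgap : (0 : ℝ) < 1 - exp (-π) := sub_pos.2 (exp_lt_one_iff.2 (neg_neg_of_pos pi_pos))
  have hlt (c r : ℝ) : 1 - exp (-π) < 1 + exp (-π) * (exp (-2 * c * (r - 1)) - 1) :=
    one_sub_lt_one_add_mul_sub_one (exp_pos _) (exp_pos _)
  have hderiv (c r : ℝ) : HasDerivAt (Θ c)
      (c * exp (-2 * c * (r - 1) - π) *
        (1 + exp (-π) * (exp (-2 * c * (r - 1)) - 1)) ^ (-(3 / 2) : ℝ)) r := by
    rw [show Θ c = _ from funext (hΘ c)]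
    convert hasDerivAt_rpow_one_add_mul_exp_sub_one (hgap.trans (hlt c r)).ne' using 1
    rw [exp_sub, div_eq_mul_inv, ← exp_neg, show (-(1 / 2) : ℝ) - 1 = -(3 / 2) by norm_num]
    ring
  have hd1 (c : ℝ) : deriv (Θ c) 1 = c * exp (-π) := by
    simp [(hderiv c 1).deriv]
  refine ⟨fun c r _ => ⟨hlt c r, hgap.trans (hlt c r)⟩, hgap, fun c _ => by simp [hΘ],
    fun c r _ => hderiv c r, fun c _ => hd1 c, fun c₁ c₂ _ _ hne => ?_⟩
  rw [hd1, hd1]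
  exact fun h => hne (mul_right_cancel₀ (exp_pos _).ne' h)
end

section
/- For c > 0, let Θ_c : ℝ → ℝ be Θ_c(r) = (1 + e^{−π}(e^{−2c(r−1)} − 1))^{−1/2}, which has fixed point Θ_c(1) = 1. If 0 < c < e^{π}, then the fixed point 1 is locally asymptotically stable for the discrete dynamical system generated by Θ_c: there exists ε > 0 such that for every r with |r − 1| < ε, the iterates Θ_c^k(r) converge to 1 as k → ∞. If c > e^{π}, then the fixed point 1 is unstable: there exists ε > 0 such that for every r ≠ 1 with |r − 1| < ε there is some k ∈ ℕ with |Θ_c^k(r) − 1| ≥ ε. -/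
/-! Only the derivative of `Θ_c` at its fixed point matters: `Θ_c'(1) = c e^{-π}`. Near an
attracting fixed point (`|f'(x₀)| < 1`) the map contracts the distance to `x₀` by a factor
`λ < 1`, so iterates converge geometrically; near a repelling one (`|f'(x₀)| > 1`) it expands
that distance by a factor `μ > 1`, so every orbit other than the fixed point leaves some
fixed neighbourhood. -/

open Real Filter Topology

section Iterate

variable {X : Type*} [MetricSpace X] {f : X → X} {x₀ : X} {ε : ℝ}

theorem tendsto_iterate_of_dist_le_mul {l : ℝ} (hl₀ : 0 ≤ l) (hl₁ : l < 1)
    (hf : ∀ x, dist x x₀ < ε → dist (f x) x₀ ≤ l * dist x x₀) {x : X} (hx : dist x x₀ < ε) :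
    Tendsto (fun k : ℕ => f^[k] x) atTop (𝓝 x₀) := by
  have hmaps : Set.MapsTo f (Metric.ball x₀ ε) (Metric.ball x₀ ε) := fun y hy =>
    (hf y hy).trans_lt <| lt_of_le_of_lt (mul_le_of_le_one_left dist_nonneg hl₁.le) hy
  have hbound : ∀ k : ℕ, dist (f^[k] x) x₀ ≤ l ^ k * dist x x₀ := by
    intro k
    induction k with
    | zero => simp
    | succ k ih =>
      rw [Function.iterate_succ_apply', pow_succ', mul_assoc]
      exact (hf _ (hmaps.iterate k hx)).trans (mul_le_mul_of_nonneg_left ih hl₀)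
  rw [tendsto_iff_dist_tendsto_zero]
  refine squeeze_zero (fun _ => dist_nonneg) hbound ?_
  simpa using (tendsto_pow_atTop_nhds_zero_of_lt_one hl₀ hl₁).mul_const (dist x x₀)

theorem exists_le_dist_iterate_of_mul_dist_le {μ : ℝ} (hμ : 1 < μ)
    (hf : ∀ x, dist x x₀ < ε → μ * dist x x₀ ≤ dist (f x) x₀) {x : X} (hx : x ≠ x₀) :
    ∃ k : ℕ, ε ≤ dist (f^[k] x) x₀ := by
  by_contra! hstay
  have hgrowth : ∀ k : ℕ, μ ^ k * dist x x₀ ≤ dist (f^[k] x) x₀ := by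
    intro k
    induction k with
    | zero => simp
    | succ k ih =>
      rw [Function.iterate_succ_apply', pow_succ', mul_assoc]
      exact (mul_le_mul_of_nonneg_left ih (by linarith)).trans (hf _ (hstay k))
  obtain ⟨k, hk⟩ := ((tendsto_pow_atTop_atTop_of_one_lt hμ).atTop_mul_const
    (dist_pos.mpr hx)).eventually_ge_atTop ε |>.exists
  exact (hk.trans (hgrowth k)).not_gt (hstay k)

end Iterate

section FixedPoint

variable {𝕜 : Type*} [NontriviallyNormedField 𝕜] {f : 𝕜 → 𝕜} {d x₀ : 𝕜}

theorem HasDerivAt.eventually_dist_le_mul (hf : HasDerivAt f d x₀) (hfix : f x₀ = x₀)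
    {l : ℝ} (hl : ‖d‖ < l) : ∀ᶠ x in 𝓝 x₀, dist (f x) x₀ ≤ l * dist x x₀ := by
  filter_upwards [(hasDerivAt_iff_isLittleO.mp hf).def (sub_pos.mpr hl)] with x hx
  rw [hfix] at hx
  rw [dist_eq_norm, dist_eq_norm]
  calc ‖f x - x₀‖ = ‖(f x - x₀ - (x - x₀) • d) + (x - x₀) • d‖ := by rw [sub_add_cancel]
    _ ≤ (l - ‖d‖) * ‖x - x₀‖ + ‖x - x₀‖ * ‖d‖ := by
      grw [norm_add_le, hx, norm_smul]
    _ = l * ‖x - x₀‖ := by ring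

theorem HasDerivAt.eventually_mul_dist_le (hf : HasDerivAt f d x₀) (hfix : f x₀ = x₀)
    {μ : ℝ} (hμ : μ < ‖d‖) : ∀ᶠ x in 𝓝 x₀, μ * dist x x₀ ≤ dist (f x) x₀ := by
  filter_upwards [(hasDerivAt_iff_isLittleO.mp hf).def (sub_pos.mpr hμ)] with x hx
  rw [hfix] at hx
  rw [dist_eq_norm, dist_eq_norm]
  calc μ * ‖x - x₀‖ = ‖x - x₀‖ * ‖d‖ - (‖d‖ - μ) * ‖x - x₀‖ := by ring
    _ ≤ ‖(x - x₀) • d‖ - ‖f x - x₀ - (x - x₀) • d‖ := by rw [norm_smul]; linarith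
    _ ≤ ‖f x - x₀‖ := by
      have := norm_sub_norm_le ((x - x₀) • d) ((x - x₀) • d - (f x - x₀))
      rw [sub_sub_cancel, norm_sub_rev] at this
      exact this

theorem HasDerivAt.exists_tendsto_iterate_of_norm_lt_one (hf : HasDerivAt f d x₀)
    (hfix : f x₀ = x₀) (hd : ‖d‖ < 1) :
    ∃ ε > 0, ∀ x, dist x x₀ < ε → Tendsto (fun k : ℕ => f^[k] x) atTop (𝓝 x₀) := by
  obtain ⟨ε, hε, hcontract⟩ := Metric.eventually_nhds_iff.mp <|
    hf.eventually_dist_le_mul hfix (l := (‖d‖ + 1) / 2) (by linarith)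
  exact ⟨ε, hε, fun x hx => tendsto_iterate_of_dist_le_mul (by positivity) (by linarith)
    (fun _ hy => hcontract hy) hx⟩

theorem HasDerivAt.exists_le_dist_iterate_of_one_lt_norm (hf : HasDerivAt f d x₀)
    (hfix : f x₀ = x₀) (hd : 1 < ‖d‖) :
    ∃ ε > 0, ∀ x ≠ x₀, ∃ k : ℕ, ε ≤ dist (f^[k] x) x₀ := by
  obtain ⟨ε, hε, hexpand⟩ := Metric.eventually_nhds_iff.mp <|
    hf.eventually_mul_dist_le hfix (μ := (‖d‖ + 1) / 2) (by linarith)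
  exact ⟨ε, hε, fun x hx => exists_le_dist_iterate_of_mul_dist_le (by linarith)
    (fun _ hy => hexpand hy) hx⟩

end FixedPoint

theorem hasDerivAt_rpow_neg_half_one_add_mul_exp (a c : ℝ) :
    HasDerivAt (fun r => (1 + a * (exp (-2 * c * (r - 1)) - 1)) ^ (-(1 / 2) : ℝ))
      (c * a) 1 := by
  have hinner : HasDerivAt (fun r => 1 + a * (exp (-2 * c * (r - 1)) - 1))
      (a * (exp (-2 * c * (1 - 1)) * (-2 * c))) 1 := by
    have hlin : HasDerivAt (fun r : ℝ => -2 * c * (r - 1)) (-2 * c) 1 := by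
      simpa using ((hasDerivAt_id (1 : ℝ)).sub_const 1).const_mul (-2 * c)
    exact ((hlin.exp.sub_const 1).const_mul a).const_add 1
  convert hinner.rpow_const (p := -(1 / 2)) (Or.inl (by simp)) using 1
  simp only [sub_self, mul_zero, exp_zero, add_zero]
  ring

/-- For `c > 0`, let `Θ_c(r) = (1 + e^{−π}(e^{−2c(r−1)} − 1))^{−1/2}`, with
fixed point `Θ_c(1) = 1`.  If `0 < c < e^π`, the fixed point `1` is locally asymptotically
stable for the discrete dynamical system generated by `Θ_c`: there is `ε > 0` such that for
every `r` with `|r − 1| < ε` the iterates `Θ_c^[k] r` converge to `1`.  If `c > e^π`, the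
fixed point `1` is unstable: there is `ε > 0` such that for every `r ≠ 1` with `|r − 1| < ε`
there is some `k` with `|Θ_c^[k] r − 1| ≥ ε`. -/
theorem poincare_map_fixed_point_stability
    (c : ℝ) (hc : 0 < c) (Θ : ℝ → ℝ)
    (hΘ : ∀ r : ℝ,
      Θ r = (1 + Real.exp (-π) * (Real.exp (-2 * c * (r - 1)) - 1)) ^ (-(1 / 2) : ℝ)) :
    Θ 1 = 1 ∧
    (c < Real.exp π →
      ∃ ε > 0, ∀ r : ℝ, |r - 1| < ε →
        Tendsto (fun k : ℕ => Θ^[k] r) atTop (nhds 1)) ∧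
    (Real.exp π < c →
      ∃ ε > 0, ∀ r : ℝ, r ≠ 1 → |r - 1| < ε →
        ∃ k : ℕ, ε ≤ |Θ^[k] r - 1|) := by
  have hfix : Θ 1 = 1 := by simp [hΘ]
  have hderiv : HasDerivAt Θ (c * exp (-π)) 1 := by
    rw [funext hΘ]
    exact hasDerivAt_rpow_neg_half_one_add_mul_exp _ c
  have hnorm : ‖c * exp (-π)‖ = c / exp π := by
    rw [Real.norm_eq_abs, abs_of_pos (by positivity), exp_neg, div_eq_mul_inv]
  refine ⟨hfix, fun hlt => ?_, fun hgt => ?_⟩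
  · exact hderiv.exists_tendsto_iterate_of_norm_lt_one hfix <| by
      rwa [hnorm, div_lt_one (exp_pos π)]
  · obtain ⟨ε, hε, hunstable⟩ := hderiv.exists_le_dist_iterate_of_one_lt_norm hfix <| by
      rwa [hnorm, one_lt_div (exp_pos π)]
    exact ⟨ε, hε, fun r hr _ => hunstable r hr⟩
end
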